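/- Let q be a prime power, F_q the finite field with q elements, ε > 0 a real number, and C ≥ 1 a real constant. Let d be the smallest positive integer with d ≥ 1/2 + 1/(4ε). If A ⊆ F_q satisfies |A| ≥ C^(1/d) · q^(1/2 + ε), then |dA²| ≥ q · C^(2 - 1/d) / (C^(2 - 1/d) + 1). -/

import Mathlib

/-!
Write `dA²` as the image of `P = (A × A)^d` under `p ↦ ∑ i, (p i).1 * (p i).2` and let `E` count
the pairs in `P × P` with equal images. By Cauchy–Schwarz, `|A|^(4d) = |P|^2 ≤ |dA²| · E`.
Expanding `E` in additive characters, `q · E = ∑ₛ |W s|^(2d)` with `W s = ∑_{x, y ∈ A} ψ (s x y)`.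
The term `s = 0` contributes `|A|^(4d)`; for `s ≠ 0`, `|W s|^2 ≤ q |A|^2`, while
`∑_{s ≠ 0} |W s|^2 ≤ q |A|^3` because the multiplicative energy of `A` is at most `|A|^3 + |A|^2`
and `q ≤ |A|^2`. Hence `q · E ≤ |A|^(4d) + q^d |A|^(2d+1)`, and the choice of `d` makes the
second term at most `C^(1/d - 2) |A|^(4d)`.
-/

open Finset

section Collisions

variable {α β : Type*} [DecidableEq β]

def collisionCount (S : Finset α) (g : α → β) : ℕ :=
  #{z ∈ S ×ˢ S | g z.1 = g z.2}

lemma collisionCount_eq_sum_sq (S : Finset α) (g : α → β) :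
    collisionCount S g = ∑ t ∈ S.image g, #{x ∈ S | g x = t} ^ 2 := by
  rw [collisionCount, card_eq_sum_card_fiberwise (f := fun z => g z.1) (t := S.image g)
    fun z hz => mem_image_of_mem g (mem_product.1 (mem_filter.1 hz).1).1]
  refine sum_congr rfl fun t _ => ?_
  rw [sq, ← card_product, filter_filter]
  congr 1
  ext ⟨x, y⟩
  simp only [mem_filter, mem_product]
  constructor
  · rintro ⟨⟨hx, hy⟩, hxy, rfl⟩
    exact ⟨⟨hx, rfl⟩, hy, hxy.symm⟩
  · rintro ⟨⟨hx, rfl⟩, hy, hyx⟩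
    exact ⟨⟨hx, hy⟩, hyx.symm, rfl⟩

lemma card_sq_le_card_image_mul_collisionCount (S : Finset α) (g : α → β) :
    #S ^ 2 ≤ #(S.image g) * collisionCount S g := by
  rw [collisionCount_eq_sum_sq, card_eq_sum_card_image g S]
  exact sq_sum_le_card_mul_sum_sq

lemma collisionCount_eq_card {S : Finset α} {g : α → β} (hg : Set.InjOn g S) :
    collisionCount S g = #S := by
  refine card_nbij' Prod.fst (fun x => (x, x)) (fun z hz => ?_) (fun x hx => ?_)
    (fun z hz => ?_) fun x _ => rfl
  · simp only [coe_filter, mem_product] at hz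
    exact hz.1.1
  · simp_all
  · simp only [coe_filter, mem_product] at hz
    exact Prod.ext rfl (hg hz.1.1 hz.1.2 hz.2)

lemma collisionCount_eq_sum_ite (S : Finset α) (g : α → β) :
    collisionCount S g = ∑ z ∈ S, ∑ w ∈ S, if g z = g w then 1 else 0 := by
  rw [collisionCount, card_filter, sum_product]

lemma collisionCount_mul_eq_mulEnergy {M : Type*} [Mul M] [DecidableEq M] (s t : Finset M) :
    collisionCount (s ×ˢ t) (fun z => z.1 * z.2) = mulEnergy s t :=
  (mulEnergy_eq_card_filter s t).symm

end Collisions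

def sumOfProducts {ι R : Type*} [Fintype ι] [Mul R] [AddCommMonoid R] (p : ι → R × R) : R :=
  ∑ i, (p i).1 * (p i).2

lemma setOf_sum_mul_eq_image_sumOfProducts {R ι : Type*} [Mul R] [AddCommMonoid R] [Fintype ι]
    [DecidableEq ι] [DecidableEq R] (A : Finset R) :
    {t : R | ∃ a a' : ι → R, (∀ i, a i ∈ A) ∧ (∀ i, a' i ∈ A) ∧ t = ∑ i, a i * a' i} =
      ((Fintype.piFinset fun _ : ι => A ×ˢ A).image sumOfProducts : Set R) := by
  ext t
  simp only [sumOfProducts, Set.mem_ofPred_eq, coe_image, Set.mem_image, mem_coe,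
    Fintype.mem_piFinset, mem_product]
  constructor
  · rintro ⟨a, a', ha, ha', rfl⟩
    exact ⟨fun i => (a i, a' i), fun i => ⟨ha i, ha' i⟩, rfl⟩
  · rintro ⟨p, hp, rfl⟩
    exact ⟨fun i => (p i).1, fun i => (p i).2, fun i => (hp i).1, fun i => (hp i).2, rfl⟩

section MulEnergy

variable {M₀ : Type*} [MonoidWithZero M₀] [IsCancelMulZero M₀] [DecidableEq M₀]

lemma filter_mul_ne_zero_eq (s t : Finset M₀) :
    {xy ∈ s ×ˢ t | xy.1 * xy.2 ≠ 0} = s.erase 0 ×ˢ t.erase 0 := by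
  ext ⟨x, y⟩
  simp only [mem_filter, mem_product, mem_erase, ne_eq, mul_eq_zero, not_or]
  tauto

lemma card_mul_fiber_le_card_erase_zero (s t : Finset M₀) {a : M₀} (ha : a ≠ 0) :
    #{xy ∈ s ×ˢ t | xy.1 * xy.2 = a} ≤ #(s.erase 0) := by
  refine card_le_card_of_injOn Prod.fst (fun xy hxy => ?_) fun xy hxy xy' hxy' hx => ?_
  · simp only [coe_filter, mem_product] at hxy
    exact mem_erase.2 ⟨left_ne_zero_of_mul (hxy.2 ▸ ha), hxy.1.1⟩
  · simp only [coe_filter, mem_product] at hxy hxy'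
    have hx0 : xy.1 ≠ 0 := left_ne_zero_of_mul (hxy.2 ▸ ha)
    refine Prod.ext hx (mul_left_cancel₀ hx0 ?_)
    rw [hxy.2, hx, hxy'.2]

lemma mulEnergy_self_le [Fintype M₀] (s : Finset M₀) : mulEnergy s s ≤ #s ^ 3 + #s ^ 2 := by
  set r : M₀ → ℕ := fun a => #{xy ∈ s ×ˢ s | xy.1 * xy.2 = a}
  set m := #(s.erase 0)
  have hr (a : M₀) (ha : a ∈ univ.erase 0) : r a ≤ m :=
    card_mul_fiber_le_card_erase_zero s s (ne_of_mem_erase ha)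
  have hsum : ∑ a ∈ univ.erase 0, r a = m ^ 2 := by
    rw [sum_card_fiberwise_eq_card_filter, sq, ← card_product, ← filter_mul_ne_zero_eq]
    simp
  have hzero : r 0 + m ^ 2 = #s ^ 2 := by
    rw [sq, sq, ← card_product, ← card_product, ← filter_mul_ne_zero_eq]
    exact card_filter_add_card_filter_not _
  have hm : m = #s ∨ m + 1 = #s := by
    by_cases h : (0 : M₀) ∈ s
    · exact .inr (card_erase_add_one h)
    · exact .inl (by simp [m, erase_eq_of_notMem h])
  calc mulEnergy s s = r 0 ^ 2 + ∑ a ∈ univ.erase 0, r a ^ 2 := by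
        rw [mulEnergy_eq_sum_sq]
        exact (add_sum_erase _ _ (mem_univ 0)).symm
    _ ≤ r 0 ^ 2 + ∑ a ∈ univ.erase 0, m * r a := by
        gcongr with a ha
        rw [sq]
        exact Nat.mul_le_mul_right _ (hr a ha)
    _ = r 0 ^ 2 + m ^ 3 := by rw [← mul_sum, hsum]; ring
    _ ≤ #s ^ 3 + #s ^ 2 := by
        rcases hm with h | h <;> rw [← h] at hzero ⊢
        · have : r 0 = 0 := by linarith
          rw [this]; nlinarith
        · have : r 0 = 2 * m + 1 := by linarith
          rw [this]; nlinarith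

end MulEnergy

section Characters

lemma AddChar.map_sum_eq_prod {A M ι : Type*} [AddCommMonoid A] [CommMonoid M] (ψ : AddChar A M)
    (s : Finset ι) (f : ι → A) : ψ (∑ i ∈ s, f i) = ∏ i ∈ s, ψ (f i) := by
  classical
  induction s using Finset.induction_on with
  | empty => simp
  | insert i s hi ih => rw [sum_insert hi, prod_insert hi, map_add_eq_mul, ih]

lemma sum_piFinset_addChar_sum {G R β ι : Type*} [AddCommMonoid G] [CommSemiring R] [Fintype ι]
    [DecidableEq ι] (ψ : AddChar G R) (S : Finset β) (g : β → G) :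
    ∑ p ∈ Fintype.piFinset fun _ : ι => S, ψ (∑ i, g (p i)) =
      (∑ z ∈ S, ψ (g z)) ^ Fintype.card ι := by
  simp_rw [ψ.map_sum_eq_prod]
  rw [sum_prod_piFinset S fun _ z => ψ (g z), prod_const, card_univ]

lemma sum_norm_sum_addChar_sq {α R : Type*} [CommRing R] [Fintype R] [DecidableEq R]
    {ψ : AddChar R ℂ} (hψ : ψ.IsPrimitive) (S : Finset α) (g : α → R) :
    ∑ s, ‖∑ z ∈ S, ψ (s * g z)‖ ^ 2 = Fintype.card R * collisionCount S g := by
  have hsq (s : R) : ((‖∑ z ∈ S, ψ (s * g z)‖ ^ 2 : ℝ) : ℂ)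
      = ∑ z ∈ S, ∑ w ∈ S, ψ (s * (g z - g w)) := by
    rw [Complex.ofReal_pow, ← Complex.mul_conj', map_sum, sum_mul_sum]
    simp_rw [← AddChar.map_neg_eq_conj, ← AddChar.map_add_eq_mul, mul_sub, sub_eq_add_neg]
  apply Complex.ofReal_injective
  push_cast [hsq, collisionCount_eq_sum_ite]
  rw [sum_comm, mul_sum]
  refine sum_congr rfl fun z _ => ?_
  rw [sum_comm, mul_sum]
  refine sum_congr rfl fun w _ => ?_
  rw [AddChar.sum_mulShift _ hψ]
  simp only [sub_eq_zero]
  split_ifs <;> simp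

variable {F : Type*} [Field F] [Fintype F] [DecidableEq F]

lemma norm_sum_addChar_mul_mul_sq_le {ψ : AddChar F ℂ} (hψ : ψ.IsPrimitive) (A B : Finset F)
    {s : F} (hs : s ≠ 0) :
    ‖∑ z ∈ A ×ˢ B, ψ (s * (z.1 * z.2))‖ ^ 2 ≤ Fintype.card F * #A * #B := by
  set f : F → ℝ := fun x => ‖∑ y ∈ B, ψ (x * (s * y))‖
  have hinj : Set.InjOn (s * ·) B := fun _ _ _ _ h => mul_left_cancel₀ hs h
  calc ‖∑ z ∈ A ×ˢ B, ψ (s * (z.1 * z.2))‖ ^ 2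
      = ‖∑ x ∈ A, ∑ y ∈ B, ψ (x * (s * y))‖ ^ 2 := by
        simp_rw [sum_product, mul_left_comm s]
    _ ≤ (∑ x ∈ A, f x) ^ 2 := by gcongr; exact norm_sum_le _ _
    _ ≤ #A * ∑ x ∈ A, f x ^ 2 := sq_sum_le_card_mul_sum_sq
    _ ≤ #A * ∑ x, f x ^ 2 := by gcongr; exact subset_univ A
    _ = Fintype.card F * #A * #B := by
        rw [sum_norm_sum_addChar_sq hψ, collisionCount_eq_card hinj]; ring

variable {ι : Type*} [Fintype ι] [DecidableEq ι] [Nonempty ι]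

lemma card_mul_collisionCount_sumOfProducts_le (A : Finset F) (hA : (Fintype.card F : ℝ) ≤ #A ^ 2) :
    Fintype.card F *
        (collisionCount (Fintype.piFinset fun _ : ι => A ×ˢ A) sumOfProducts : ℝ)
      ≤ #A ^ (4 * Fintype.card ι) +
          Fintype.card F ^ Fintype.card ι * #A ^ (2 * Fintype.card ι + 1) := by
  obtain ⟨k, hk⟩ := Nat.exists_eq_add_one.2 (Fintype.card_pos (α := ι))
  set ψ := AddChar.FiniteField.primitiveChar_to_Complex F
  have hψ : ψ.IsPrimitive := AddChar.FiniteField.primitiveChar_to_Complex_isPrimitive F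
  set q : ℝ := (Fintype.card F : ℝ)
  set n : ℝ := (#A : ℝ)
  set W : F → ℝ := fun s => ‖∑ z ∈ A ×ˢ A, ψ (s * (z.1 * z.2))‖ ^ 2
  have hW_zero : W 0 = n ^ 4 := by simp [W, n]; ring
  have hW_le (s : F) (hs : s ∈ univ.erase 0) : W s ≤ q * n ^ 2 := by
    have h := norm_sum_addChar_mul_mul_sq_le hψ A A (ne_of_mem_erase hs)
    rwa [mul_assoc, ← sq] at h
  have hW_sum : ∑ s ∈ univ.erase 0, W s ≤ q * n ^ 3 := by
    have hparseval := sum_norm_sum_addChar_sq hψ (A ×ˢ A) fun z => z.1 * z.2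
    rw [collisionCount_mul_eq_mulEnergy, ← add_sum_erase _ _ (mem_univ 0)] at hparseval
    change W 0 + _ = _ at hparseval
    have henergy := Nat.cast_le (α := ℝ) |>.2 (mulEnergy_self_le A)
    push_cast at henergy
    nlinarith
  calc q * (collisionCount (Fintype.piFinset fun _ : ι => A ×ˢ A) sumOfProducts : ℝ)
      = ∑ s, W s ^ (k + 1) := by
        rw [← sum_norm_sum_addChar_sq hψ]
        refine sum_congr rfl fun s _ => ?_
        simp_rw [sumOfProducts, mul_sum]
        rw [sum_piFinset_addChar_sum ψ (A ×ˢ A) fun z => s * (z.1 * z.2), norm_pow, hk,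
          ← pow_mul, ← pow_mul, mul_comm]
    _ = n ^ (4 * (k + 1)) + ∑ s ∈ univ.erase 0, W s ^ (k + 1) := by
        rw [← add_sum_erase _ _ (mem_univ 0), hW_zero, ← pow_mul]
    _ ≤ n ^ (4 * (k + 1)) + ∑ s ∈ univ.erase 0, (q * n ^ 2) ^ k * W s := by
        gcongr with s hs
        rw [pow_succ]
        exact mul_le_mul_of_nonneg_right (pow_le_pow_left₀ (by positivity) (hW_le s hs) k)
          (by positivity)
    _ ≤ n ^ (4 * (k + 1)) + (q * n ^ 2) ^ k * (q * n ^ 3) := by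
        rw [← mul_sum]
        gcongr
    _ = n ^ (4 * Fintype.card ι) + q ^ Fintype.card ι * n ^ (2 * Fintype.card ι + 1) := by
        rw [hk]
        ring

lemma card_mul_pow_le_card_image_sumOfProducts (A : Finset F) (hA : (Fintype.card F : ℝ) ≤ #A ^ 2) :
    Fintype.card F * (#A : ℝ) ^ (4 * Fintype.card ι) ≤
      #((Fintype.piFinset fun _ : ι => A ×ˢ A).image sumOfProducts) *
        (#A ^ (4 * Fintype.card ι) +
          Fintype.card F ^ Fintype.card ι * #A ^ (2 * Fintype.card ι + 1)) := by
  set P := Fintype.piFinset fun _ : ι => A ×ˢ A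
  set I : ℝ := (#(P.image sumOfProducts) : ℝ)
  set E : ℝ := (collisionCount P sumOfProducts : ℝ)
  have hCS : (#A : ℝ) ^ (4 * Fintype.card ι) ≤ I * E := by
    have h := Nat.cast_le (α := ℝ) |>.2 (card_sq_le_card_image_mul_collisionCount P sumOfProducts)
    simp only [P, Fintype.card_piFinset, card_product, prod_const, card_univ] at h
    push_cast at h
    calc (#A : ℝ) ^ (4 * Fintype.card ι) = ((#A * #A) ^ Fintype.card ι) ^ 2 := by ring
      _ ≤ _ := h
  calc (Fintype.card F : ℝ) * #A ^ (4 * Fintype.card ι)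
      ≤ Fintype.card F * (I * E) := by gcongr
    _ = I * (Fintype.card F * E) := by ring
    _ ≤ _ := by gcongr; exact card_mul_collisionCount_sumOfProducts_le A hA

end Characters

lemma le_sq_of_rpow_le {q n ε : ℝ} (hq : 1 ≤ q) (hε : 0 ≤ ε) (hn : q ^ (1 / 2 + ε) ≤ n) :
    q ≤ n ^ 2 := calc
  q = (q ^ ((1 : ℝ) / 2)) ^ 2 := by
    rw [← Real.rpow_natCast, ← Real.rpow_mul (by positivity)]
    norm_num
  _ ≤ (q ^ (1 / 2 + ε)) ^ 2 :=
    pow_le_pow_left₀ (by positivity) (Real.rpow_le_rpow_of_exponent_le hq (by linarith)) 2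
  _ ≤ n ^ 2 := pow_le_pow_left₀ (by positivity) hn 2

lemma rpow_mul_pow_le_pow_two_mul_sub_one {q n C ε : ℝ} {d : ℕ} (hq : 1 ≤ q) (hC : 1 ≤ C)
    (hε : 0 < ε) (hd : 1 / 2 + 1 / (4 * ε) ≤ d) (hn : C ^ (1 / d : ℝ) * q ^ (1 / 2 + ε) ≤ n) :
    C ^ (2 - 1 / d : ℝ) * q ^ d ≤ n ^ (2 * d - 1) := by
  have hd1 : 1 ≤ d := by
    have : (1 : ℝ) / 2 < d := lt_of_lt_of_le (by simp; positivity) hd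
    exact_mod_cast (show (0 : ℝ) < d by linarith)
  have hm : ((2 * d - 1 : ℕ) : ℝ) = 2 * d - 1 := by
    rw [Nat.cast_sub (by omega)]
    push_cast
    ring
  have hexp : (d : ℝ) ≤ (1 / 2 + ε) * (2 * d - 1) := by
    have : ε * (1 / (4 * ε)) = 1 / 4 := by field_simp
    nlinarith [mul_le_mul_of_nonneg_left hd hε.le]
  have hC' : (2 - 1 / d : ℝ) = 1 / d * (2 * d - 1) := by field_simp
  calc C ^ (2 - 1 / d : ℝ) * q ^ d
      ≤ C ^ (1 / d * (2 * d - 1) : ℝ) * q ^ ((1 / 2 + ε) * (2 * d - 1)) := by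
        rw [hC', ← Real.rpow_natCast q]
        gcongr
    _ = (C ^ (1 / d : ℝ) * q ^ (1 / 2 + ε)) ^ (2 * d - 1) := by
        rw [← Real.rpow_natCast, hm, Real.mul_rpow (by positivity) (by positivity),
          ← Real.rpow_mul (by positivity), ← Real.rpow_mul (by positivity)]
    _ ≤ n ^ (2 * d - 1) := by gcongr

/-- If `|A| ≥ C^(1/d) · q^(1/2+ε)` where `C ≥ 1` and `d` is the smallest positive
integer with `d ≥ 1/2 + 1/(4ε)`, then `|dA²| ≥ q · C^(2-1/d) / (C^(2-1/d) + 1)`. -/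
theorem stmt_5 {F : Type*} [Field F] [Fintype F] (ε : ℝ) (hε : 0 < ε)
    (C : ℝ) (hC : 1 ≤ C)
    (d : ℕ) (hd : d = max 1 ⌈(1 : ℝ) / 2 + 1 / (4 * ε)⌉₊)
    (A : Finset F)
    (hA : (A.card : ℝ) ≥ C ^ ((1 : ℝ) / d) * (Fintype.card F : ℝ) ^ ((1 : ℝ) / 2 + ε)) :
    (Set.ncard {t : F | ∃ a a' : Fin d → F, (∀ i, a i ∈ A) ∧ (∀ i, a' i ∈ A) ∧
        t = ∑ i, a i * a' i} : ℝ) ≥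
      (Fintype.card F : ℝ) * C ^ ((2 : ℝ) - 1 / d) / (C ^ ((2 : ℝ) - 1 / d) + 1) := by
  classical
  have hd1 : 1 ≤ d := hd ▸ le_max_left _ _
  have hd' : (1 : ℝ) / 2 + 1 / (4 * ε) ≤ d := by
    rw [hd, Nat.cast_max]
    exact le_max_of_le_right (Nat.le_ceil _)
  set q : ℝ := (Fintype.card F : ℝ)
  set n : ℝ := (#A : ℝ)
  set K : ℝ := C ^ ((2 : ℝ) - 1 / d)
  have hq : 1 ≤ q := Nat.one_le_cast.2 Fintype.card_pos
  have hn : q ^ ((1 : ℝ) / 2 + ε) ≤ n :=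
    (le_mul_of_one_le_left (by positivity) (Real.one_le_rpow hC (by positivity))).trans hA
  have hn0 : 0 < n := (by positivity : (0 : ℝ) < q ^ ((1 : ℝ) / 2 + ε)).trans_le hn
  have : Nonempty (Fin d) := ⟨⟨0, hd1⟩⟩
  have hbound :=
    card_mul_pow_le_card_image_sumOfProducts (ι := Fin d) A (le_sq_of_rpow_le hq hε.le hn)
  simp only [Fintype.card_fin] at hbound
  have hKR : K * (q ^ d * n ^ (2 * d + 1)) ≤ n ^ (4 * d) := calc
    K * (q ^ d * n ^ (2 * d + 1)) = K * q ^ d * n ^ (2 * d + 1) := by ring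
    _ ≤ n ^ (2 * d - 1) * n ^ (2 * d + 1) := by
      gcongr
      exact rpow_mul_pow_le_pow_two_mul_sub_one hq hC hε hd' hA
    _ = n ^ (4 * d) := by rw [← pow_add]; congr 1; omega
  rw [setOf_sum_mul_eq_image_sumOfProducts, Set.ncard_coe_finset, ge_iff_le, div_le_iff₀ (by positivity)]
  set I : ℝ := (#((Fintype.piFinset fun _ : Fin d => A ×ˢ A).image sumOfProducts) : ℝ)
  refine le_of_mul_le_mul_right ?_ (by positivity : 0 < n ^ (4 * d))
  calc q * K * n ^ (4 * d) = K * (q * n ^ (4 * d)) := by ring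
    _ ≤ K * (I * (n ^ (4 * d) + q ^ d * n ^ (2 * d + 1))) := by gcongr
    _ = I * (K * n ^ (4 * d) + K * (q ^ d * n ^ (2 * d + 1))) := by ring
    _ ≤ I * (K * n ^ (4 * d) + n ^ (4 * d)) := by gcongr
    _ = I * (K + 1) * n ^ (4 * d) := by ring
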